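/- Safety of combined pruning: for nonnegative unit vectors x, y in ℝ^d with time difference Δt ≥ 0, decay λ ≥ 0, and any index j, if sim_Δt(x,y) ≥ θ then both (⟨x̃_j, ỹ_j⟩ + ‖x̂_j‖·‖ŷ_j‖)·e^{−λΔt} ≥ θ and min{‖x̂_j‖, ⟨x̂_j, m⟩}·e^{−λΔt} + ⟨x̃_j, y⟩·e^{−λΔt} ≥ θ, where m is any coordinatewise upper bound of y. -/

import Mathlib

open scoped BigOperators

/-- The prefix of `x` consisting of its first `j` coordinates (others zeroed). -/
noncomputable def prefixVec {d : ℕ} (j : ℕ) (x : EuclideanSpace ℝ (Fin d)) :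
    EuclideanSpace ℝ (Fin d) :=
  WithLp.toLp 2 (fun k : Fin d => if (k : ℕ) < j then x k else 0)

/-!
Since prefixes and suffixes have disjoint supports, `⟪x, y⟫ = ⟪x̂, ŷ⟫ + ⟪x̃, ỹ⟫` with
`⟪x̂, ŷ⟫ = ⟪x̂, y⟫` and `⟪x̃, ỹ⟫ = ⟪x̃, y⟫`. By Cauchy–Schwarz the prefix term is at most
`‖x̂‖ ‖ŷ‖` and at most `‖x̂‖ ‖y‖ = ‖x̂‖`; as `x̂ ≥ 0` and `y ≤ m`, it is also at most `⟪x̂, m⟫`.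
The decay factor is positive, so these bounds survive multiplication by it.
-/

open RealInnerProductSpace

lemma inner_le_inner_of_nonneg_of_le {ι : Type*} [Fintype ι] {u v w : EuclideanSpace ℝ ι}
    (hu : ∀ k, 0 ≤ u k) (hvw : ∀ k, v k ≤ w k) : ⟪u, v⟫ ≤ ⟪u, w⟫ := by
  simp only [PiLp.inner_apply, RCLike.inner_apply, conj_trivial]
  exact Finset.sum_le_sum fun k _ => mul_le_mul_of_nonneg_right (hvw k) (hu k)

namespace prefixVec

variable {d : ℕ} (j : ℕ)

lemma nonneg {x : EuclideanSpace ℝ (Fin d)} (hx : ∀ k, 0 ≤ x k) (k : Fin d) :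
    0 ≤ prefixVec j x k := by
  by_cases h : (k : ℕ) < j <;> simp [prefixVec, h, hx k]

lemma inner_sub_self_self (x y : EuclideanSpace ℝ (Fin d)) :
    ⟪x - prefixVec j x, prefixVec j y⟫ = 0 := by
  simp only [PiLp.inner_apply, RCLike.inner_apply, conj_trivial]
  refine Finset.sum_eq_zero fun k _ => ?_
  by_cases h : (k : ℕ) < j <;> simp [prefixVec, h]

lemma inner_self_left (x y : EuclideanSpace ℝ (Fin d)) :
    ⟪prefixVec j x, y⟫ = ⟪prefixVec j x, prefixVec j y⟫ := by
  rw [← sub_eq_zero, ← inner_sub_right, real_inner_comm, inner_sub_self_self]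

lemma inner_sub_self_left (x y : EuclideanSpace ℝ (Fin d)) :
    ⟪x - prefixVec j x, y⟫ = ⟪x - prefixVec j x, y - prefixVec j y⟫ := by
  rw [inner_sub_right, inner_sub_self_self, sub_zero]

lemma inner_eq_inner_add_inner_sub (x y : EuclideanSpace ℝ (Fin d)) :
    ⟪x, y⟫ = ⟪prefixVec j x, y⟫ + ⟪x - prefixVec j x, y⟫ := by
  rw [inner_sub_left]
  ring

lemma inner_le_inner_sub_add_norm_mul_norm (x y : EuclideanSpace ℝ (Fin d)) :
    ⟪x, y⟫ ≤ ⟪x - prefixVec j x, y - prefixVec j y⟫ + ‖prefixVec j x‖ * ‖prefixVec j y‖ := by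
  rw [inner_eq_inner_add_inner_sub j, inner_self_left, inner_sub_self_left, add_comm]
  exact add_le_add_right (real_inner_le_norm (prefixVec j x) (prefixVec j y)) _

lemma inner_le_min_norm_inner {x y m : EuclideanSpace ℝ (Fin d)} (hy : ‖y‖ = 1)
    (hx : ∀ k, 0 ≤ x k) (hm : ∀ k, y k ≤ m k) :
    ⟪prefixVec j x, y⟫ ≤ min ‖prefixVec j x‖ ⟪prefixVec j x, m⟫ :=
  le_min (by simpa [hy] using real_inner_le_norm (prefixVec j x) y)
    (inner_le_inner_of_nonneg_of_le (nonneg j hx) hm)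

end prefixVec

theorem sssj_combined_pruning_safe_general {d : ℕ} (x y m : EuclideanSpace ℝ (Fin d))
    (j : ℕ) (dt lam θ : ℝ)
    (hy : ‖y‖ = 1)
    (hxpos : ∀ k, 0 ≤ x k)
    (hm : ∀ k, y k ≤ m k)
    (hsim : (inner ℝ x y : ℝ) * Real.exp (-lam * dt) ≥ θ) :
    ((inner ℝ (x - prefixVec j x) (y - prefixVec j y) : ℝ) +
        ‖prefixVec j x‖ * ‖prefixVec j y‖) * Real.exp (-lam * dt) ≥ θ ∧
    min ‖prefixVec j x‖ (inner ℝ (prefixVec j x) m : ℝ) * Real.exp (-lam * dt) +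
        (inner ℝ (x - prefixVec j x) y : ℝ) * Real.exp (-lam * dt) ≥ θ := by
  have hexp : 0 ≤ Real.exp (-lam * dt) := Real.exp_nonneg _
  constructor
  · calc θ ≤ ⟪x, y⟫ * Real.exp (-lam * dt) := hsim
      _ ≤ _ := mul_le_mul_of_nonneg_right
        (prefixVec.inner_le_inner_sub_add_norm_mul_norm j x y) hexp
  · rw [← add_mul]
    calc θ ≤ ⟪x, y⟫ * Real.exp (-lam * dt) := hsim
      _ = (⟪prefixVec j x, y⟫ + ⟪x - prefixVec j x, y⟫) * Real.exp (-lam * dt) := by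
        rw [← prefixVec.inner_eq_inner_add_inner_sub]
      _ ≤ _ := by
        gcongr
        exact prefixVec.inner_le_min_norm_inner j hy hxpos hm

theorem sssj_combined_pruning_safe {d : ℕ} (x y m : EuclideanSpace ℝ (Fin d))
    (j : ℕ) (dt lam θ : ℝ)
    (hx : ‖x‖ = 1) (hy : ‖y‖ = 1)
    (hxpos : ∀ k, 0 ≤ x k) (hypos : ∀ k, 0 ≤ y k)
    (hm : ∀ k, y k ≤ m k)
    (hdt : 0 ≤ dt) (hlam : 0 ≤ lam) (hθ : 0 < θ)
    (hsim : (inner ℝ x y : ℝ) * Real.exp (-lam * dt) ≥ θ) :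
    ((inner ℝ (x - prefixVec j x) (y - prefixVec j y) : ℝ) +
        ‖prefixVec j x‖ * ‖prefixVec j y‖) * Real.exp (-lam * dt) ≥ θ ∧
    min ‖prefixVec j x‖ (inner ℝ (prefixVec j x) m : ℝ) * Real.exp (-lam * dt) +
        (inner ℝ (x - prefixVec j x) y : ℝ) * Real.exp (-lam * dt) ≥ θ :=
  sssj_combined_pruning_safe_general x y m j dt lam θ hy hxpos hm hsim
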